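/- Let K_i ∈ ℝ^{(m_i+…+m_N)×n} and L_i ∈ ℝ^{n×(p_1+…+p_i)} (i = 1,…,N) be gains such that A^{KL}_{k,k−1} is Hurwitz for every k = 1,…,N+1. Then the closed-loop matrix 𝒜 = [[A_K, B_KC],[BC_K, A]] is Hurwitz; i.e., the controller with realization (A_K, B_K, C_K) internally stabilizes the plant. -/

import Mathlib

open Matrix

namespace TriLQG

noncomputable section

variable {N : ℕ}

/-- Index type of an `(N+1)`-block partitioned coordinate space with block sizes `d`. -/
abbrev Idx {N : ℕ} (d : Fin (N+1) → ℕ) : Type := Σ k : Fin (N+1), Fin (d k)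

/-- Indices belonging to blocks `i, i+1, …, N`. -/
abbrev IdxGe {N : ℕ} (d : Fin (N+1) → ℕ) (i : Fin (N+1)) : Type := {x : Idx d // i ≤ x.1}

/-- Indices belonging to blocks `0, 1, …, i`. -/
abbrev IdxLe {N : ℕ} (d : Fin (N+1) → ℕ) (i : Fin (N+1)) : Type := {x : Idx d // x.1 ≤ i}

/-- The selector matrix `E^{↓i}` (columns of the identity for blocks `i,…,N`). -/
def padGe (d : Fin (N+1) → ℕ) (i : Fin (N+1)) : Matrix (Idx d) (IdxGe d i) ℝ :=
  Matrix.of fun r c => if r = (c : Idx d) then 1 else 0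

/-- The selector matrix `E^{↑i}` (columns of the identity for blocks `0,…,i`). -/
def padLe (d : Fin (N+1) → ℕ) (i : Fin (N+1)) : Matrix (Idx d) (IdxLe d i) ℝ :=
  Matrix.of fun r c => if r = (c : Idx d) then 1 else 0

/-- Complexification of a real matrix. -/
def mc {α β : Type*} (M : Matrix α β ℝ) : Matrix α β ℂ := M.map Complex.ofReal

/-- A real square matrix is Hurwitz if its (complex) spectrum lies in the open left half plane. -/
def IsHurwitz {t : Type*} [Fintype t] [DecidableEq t] (M : Matrix t t ℝ) : Prop :=
  ∀ z ∈ spectrum ℂ (mc M), z.re < 0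

open Classical in
/-- The (unique, symmetric, positive semidefinite) square root of a positive semidefinite
real matrix; junk value `0` if the matrix is not positive semidefinite. -/
def msqrt {t : Type*} [Fintype t] [DecidableEq t] (M : Matrix t t ℝ) : Matrix t t ℝ :=
  if h : M.PosSemidef then
    (h.1.eigenvectorUnitary : Matrix t t ℝ) * diagonal (Real.sqrt ∘ h.1.eigenvalues) *
      (star h.1.eigenvectorUnitary : Matrix t t ℝ)
  else 0

/-- Full column rank. -/
def FullColRank {α β : Type*} [Fintype β] {R : Type*} [CommRing R] (M : Matrix α β R) : Prop :=
  M.rank = Fintype.card β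

/-- Full row rank. -/
def FullRowRank {α β : Type*} [Fintype α] [Fintype β] {R : Type*} [CommRing R]
    (M : Matrix α β R) : Prop :=
  M.rank = Fintype.card α

/-- `ARE_p(Ã,B̃,F̃,H̃)` together with its gain: `X` is a symmetric solution of the
control algebraic Riccati equation and `K` is the associated gain. -/
def AREp {n' m' q' : Type*} [Fintype n'] [Fintype m'] [Fintype q'] [DecidableEq m']
    (At : Matrix n' n' ℝ) (Bt : Matrix n' m' ℝ) (Ft : Matrix q' n' ℝ) (Ht : Matrix q' m' ℝ)
    (X : Matrix n' n' ℝ) (K : Matrix m' n' ℝ) : Prop :=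
  X.IsSymm ∧
  Atᵀ * X + X * At - (X * Bt + Ftᵀ * Ht) * (Htᵀ * Ht)⁻¹ * (X * Bt + Ftᵀ * Ht)ᵀ + Ftᵀ * Ft = 0 ∧
  K = -((Htᵀ * Ht)⁻¹ * (X * Bt + Ftᵀ * Ht)ᵀ)

/-- `ARE_d(Ã,C̃,W̃,Ṽ)` together with its gain. -/
def AREd {n' p' r' : Type*} [Fintype n'] [Fintype p'] [Fintype r'] [DecidableEq p']
    (At : Matrix n' n' ℝ) (Ct : Matrix p' n' ℝ) (Wt : Matrix n' r' ℝ) (Vt : Matrix p' r' ℝ)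
    (Y : Matrix n' n' ℝ) (L : Matrix n' p' ℝ) : Prop :=
  Y.IsSymm ∧
  At * Y + Y * Atᵀ - (Ct * Y + Vt * Wtᵀ)ᵀ * (Vt * Vtᵀ)⁻¹ * (Ct * Y + Vt * Wtᵀ) + Wt * Wtᵀ = 0 ∧
  L = -((Ct * Y + Vt * Wtᵀ)ᵀ * (Vt * Vtᵀ)⁻¹)

/-- Lower block triangular sparsity. -/
def IsLBT {N : ℕ} {d e : Fin (N+1) → ℕ} (M : Matrix (Idx d) (Idx e) ℝ) : Prop :=
  ∀ a : Idx d, ∀ b : Idx e, a.1 < b.1 → M a b = 0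

/-- The data of the `(N+1)`-player triangular plant. -/
structure Plant (N : ℕ) where
  nd : Fin (N+1) → ℕ
  md : Fin (N+1) → ℕ
  pd : Fin (N+1) → ℕ
  q : ℕ
  r : ℕ
  A : Matrix (Idx nd) (Idx nd) ℝ
  B : Matrix (Idx nd) (Idx md) ℝ
  C : Matrix (Idx pd) (Idx nd) ℝ
  F : Matrix (Fin q) (Idx nd) ℝ
  H : Matrix (Fin q) (Idx md) ℝ
  W : Matrix (Idx nd) (Fin r) ℝ
  V : Matrix (Idx pd) (Fin r) ℝ

variable (P : Plant N)

/-- family of controller gains `K_i ∈ ℝ^{(m_i+⋯+m_N)×n}` -/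
abbrev KGains (P : Plant N) : Type := (i : Fin (N+1)) → Matrix (IdxGe P.md i) (Idx P.nd) ℝ

/-- family of observer gains `L_i ∈ ℝ^{n×(p_1+⋯+p_i)}` -/
abbrev LGains (P : Plant N) : Type := (i : Fin (N+1)) → Matrix (Idx P.nd) (IdxLe P.pd i) ℝ

/-- family of symmetric matrices `X_i` (or `Y_i`) -/
abbrev SFam (P : Plant N) : Type := Fin (N+1) → Matrix (Idx P.nd) (Idx P.nd) ℝ

def Bdown (i : Fin (N+1)) : Matrix (Idx P.nd) (IdxGe P.md i) ℝ := P.B.submatrix id Subtype.val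
def Hdown (i : Fin (N+1)) : Matrix (Fin P.q) (IdxGe P.md i) ℝ := P.H.submatrix id Subtype.val
def Cup (i : Fin (N+1)) : Matrix (IdxLe P.pd i) (Idx P.nd) ℝ := P.C.submatrix Subtype.val id
def Vup (i : Fin (N+1)) : Matrix (IdxLe P.pd i) (Fin P.r) ℝ := P.V.submatrix Subtype.val id

/-- `Ψ_{↓i}^{↓i} = (H^{↓i})ᵀ H^{↓i}` -/
def Psidd (i : Fin (N+1)) : Matrix (IdxGe P.md i) (IdxGe P.md i) ℝ := (Hdown P i)ᵀ * Hdown P i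

/-- `Φ_{↑j}^{↑j} = V_{↑j} (V_{↑j})ᵀ` -/
def Phiuu (j : Fin (N+1)) : Matrix (IdxLe P.pd j) (IdxLe P.pd j) ℝ := Vup P j * (Vup P j)ᵀ

/-- The coupled Riccati system (2a)–(2d) of the paper. -/
def Coupled (X : SFam P) (K : KGains P) (Y : SFam P) (L : LGains P) : Prop :=
  AREp P.A (Bdown P 0) P.F (Hdown P 0) (X 0) (K 0) ∧
  (∀ t : Fin N,
    AREp (P.A + L t.castSucc * Cup P t.castSucc) (Bdown P t.succ)
      (-(Hdown P t.castSucc * K t.castSucc)) (Hdown P t.succ) (X t.succ) (K t.succ)) ∧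
  AREd P.A (Cup P (Fin.last N)) P.W (Vup P (Fin.last N)) (Y (Fin.last N)) (L (Fin.last N)) ∧
  (∀ t : Fin N,
    AREd (P.A + Bdown P t.succ * K t.succ) (Cup P t.castSucc)
      (-(L t.succ * Vup P t.succ)) (Vup P t.castSucc) (Y t.castSucc) (L t.castSucc))

/-- `A^{KL}_{k+1,k}` for `k = 0, 1, …, N+1` (`k = 0` gives `A+BK_1`,
`k = N+1` gives `A+L_N C`). -/
def AKL (K : KGains P) (L : LGains P) (k : Fin (N+2)) : Matrix (Idx P.nd) (Idx P.nd) ℝ :=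
  if hk : k.1 < N + 1 then
    (if k.1 = 0 then P.A + Bdown P 0 * K 0
     else
       have h1 : k.1 - 1 < N + 1 := by omega
       P.A + Bdown P ⟨k.1, hk⟩ * K ⟨k.1, hk⟩ +
         L ⟨k.1 - 1, h1⟩ * Cup P ⟨k.1 - 1, h1⟩)
  else P.A + L (Fin.last N) * Cup P (Fin.last N)

/-- index set of the `n(N+1)`-dimensional controller state space -/
abbrev CtrIx {N : ℕ} (nd : Fin (N+1) → ℕ) : Type := Fin (N+1) × Idx nd

/-- index set of the `n(N+2)`-dimensional closed-loop state space:
`N+1` controller blocks and one plant block -/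
abbrev BigIx {N : ℕ} (nd : Fin (N+1) → ℕ) : Type := CtrIx nd ⊕ Idx nd

/-- the incidence matrix `ζ` -/
def zetaN (nd : Fin (N+1) → ℕ) : Matrix (CtrIx nd) (CtrIx nd) ℝ :=
  Matrix.of fun x y => if y.1 ≤ x.1 ∧ x.2 = y.2 then 1 else 0

/-- block diagonal matrix -/
def blkDiagN {nd : Fin (N+1) → ℕ} (f : Fin (N+1) → Matrix (Idx nd) (Idx nd) ℝ) :
    Matrix (CtrIx nd) (CtrIx nd) ℝ :=
  Matrix.of fun x y => if x.1 = y.1 then f x.1 x.2 y.2 else 0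

/-- `A_K` of the optimal controller realization -/
def AK (K : KGains P) (L : LGains P) : Matrix (CtrIx P.nd) (CtrIx P.nd) ℝ :=
  blkDiagN (fun _ => P.A) + blkDiagN (fun k => L k * Cup P k) +
    zetaN P.nd * blkDiagN (fun k => Bdown P k * K k) * (zetaN P.nd)⁻¹

/-- `B_K` of the optimal controller realization -/
def BK (L : LGains P) : Matrix (CtrIx P.nd) (Idx P.pd) ℝ :=
  Matrix.of fun x c => -((L x.1 * (padLe P.pd x.1)ᵀ) x.2 c)

/-- `C_K` of the optimal controller realization -/
def CK (K : KGains P) : Matrix (Idx P.md) (CtrIx P.nd) ℝ :=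
  (Matrix.of fun rr (x : CtrIx P.nd) => (padGe P.md x.1 * K x.1) rr x.2) * (zetaN P.nd)⁻¹

/-- closed-loop `𝒜` -/
def Acal (K : KGains P) (L : LGains P) : Matrix (BigIx P.nd) (BigIx P.nd) ℝ :=
  Matrix.fromBlocks (AK P K L) (BK P L * P.C) (P.B * CK P K) P.A

/-- closed-loop `ℬ` -/
def Bcal : Matrix (BigIx P.nd) (Idx P.md) ℝ :=
  Matrix.of fun x j => Sum.elim (fun _ => (0:ℝ)) (fun a => P.B a j) x

/-- closed-loop `𝒲` -/
def Wcal (L : LGains P) : Matrix (BigIx P.nd) (Fin P.r) ℝ :=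
  Matrix.of fun x j => Sum.elim (fun y => (BK P L * P.V) y j) (fun a => P.W a j) x

/-- closed-loop `ℱ` -/
def Fcal (K : KGains P) : Matrix (Fin P.q) (BigIx P.nd) ℝ :=
  Matrix.of fun i x => Sum.elim (fun y => (P.H * CK P K) i y) (fun a => P.F i a) x

/-- closed-loop `𝒞` -/
def Ccal : Matrix (Idx P.pd) (BigIx P.nd) ℝ :=
  Matrix.of fun i x => Sum.elim (fun _ => (0:ℝ)) (fun a => P.C i a) x

/-- block index of a closed-loop index -/
def blkOf {nd : Fin (N+1) → ℕ} (x : BigIx nd) : Fin (N+2) :=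
  Sum.elim (fun y => y.1.castSucc) (fun _ => Fin.last (N+1)) x

/-- within-block state of a closed-loop index -/
def stOf {nd : Fin (N+1) → ℕ} (x : BigIx nd) : Idx nd :=
  Sum.elim Prod.snd id x

/-- the incidence matrix `ζ̄` of the `(N+2)`-fold block structure -/
def zetaBar (nd : Fin (N+1) → ℕ) : Matrix (BigIx nd) (BigIx nd) ℝ :=
  Matrix.of fun x y => if blkOf y ≤ blkOf x ∧ stOf x = stOf y then 1 else 0

/-- embedding of a within-block index into the closed-loop index set, at block `k` -/
def emb {nd : Fin (N+1) → ℕ} (k : Fin (N+2)) (a : Idx nd) : BigIx nd :=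
  if h : k.1 < N + 1 then Sum.inl (⟨⟨k.1, h⟩, a⟩ : CtrIx nd) else Sum.inr a

/-- `𝒦_i` of the paper (eq. (9)). -/
def Kcal (K : KGains P) (i : Fin (N+1)) : Matrix (IdxGe P.md i) (BigIx P.nd) ℝ :=
  (padGe P.md i)ᵀ *
    Matrix.of fun (rr : Idx P.md) (x : BigIx P.nd) =>
      Sum.elim
        (fun y : CtrIx P.nd =>
          if hl : y.1.1 < N then
            (if y.1 < i then (0:ℝ)
             else
               have h1 : y.1.1 + 1 < N + 1 := by omega
               (padGe P.md ⟨y.1.1 + 1, h1⟩ * K ⟨y.1.1 + 1, h1⟩ -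
                   padGe P.md y.1 * K y.1) rr y.2)
          else (-(padGe P.md (Fin.last N) * K (Fin.last N))) rr y.2)
        (fun a => (padGe P.md i * K i) rr a) x

/-- `ℒ_j` of the paper (eq. (10)). -/
def Lcal (L : LGains P) (j : Fin (N+1)) : Matrix (BigIx P.nd) (IdxLe P.pd j) ℝ :=
  Matrix.of fun x c =>
    Sum.elim
      (fun y : CtrIx P.nd =>
        if y.1 < j then (L y.1 * (padLe P.pd y.1)ᵀ * padLe P.pd j) y.2 c else (L j) y.2 c)
      (fun a => (L j) a c) x

/-- `J̃_i` of the paper (eq. (11)). -/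
def Jtil (nd : Fin (N+1) → ℕ) (i : Fin (N+1)) : Matrix (Idx nd) (BigIx nd) ℝ :=
  Matrix.of fun a x =>
    Sum.elim
      (fun y : CtrIx nd => if 0 < i.1 ∧ y.1.1 = i.1 - 1 ∧ a = y.2 then (1:ℝ) else 0)
      (fun b => if a = b then (-1:ℝ) else 0) x

/-- `Ĵ_j` of the paper (eq. (11)). -/
def Jhat (nd : Fin (N+1) → ℕ) (j : Fin (N+1)) : Matrix (BigIx nd) (Idx nd) ℝ :=
  Matrix.of fun x a =>
    Sum.elim
      (fun y : CtrIx nd => if j < y.1 ∧ y.2 = a then (1:ℝ) else 0)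
      (fun b => if b = a then (1:ℝ) else 0) x

/-- `Γ_i = −(Ψ_{↓i}^{↓i})^{1/2} 𝒦_i` for `i ≥ 1` (Lemma 2 of the paper). -/
def Gam (K : KGains P) (i : Fin (N+1)) : Matrix (IdxGe P.md i) (BigIx P.nd) ℝ :=
  -(msqrt (Psidd P i) * Kcal P K i)

/-- `Λ_j = −ℒ_j (Φ_{↑j}^{↑j})^{1/2}` for `j ≤ N` (Lemma 2 of the paper). -/
def Lam (L : LGains P) (j : Fin (N+1)) : Matrix (BigIx P.nd) (IdxLe P.pd j) ℝ :=
  -(Lcal P L j * msqrt (Phiuu P j))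

/-- the inner factor `U_1(s)` -/
def Uone (K : KGains P) (L : LGains P) (s : ℂ) : Matrix (Fin P.q) (IdxGe P.md 0) ℂ :=
  mc (P.F + Hdown P 0 * K 0) * (s • 1 - mc (AKL P K L 0))⁻¹ * mc (Bdown P 0) *
      (mc (msqrt (Psidd P 0)))⁻¹ +
    mc (Hdown P 0) * (mc (msqrt (Psidd P 0)))⁻¹

/-- the inner factor `U_{t+2}(s)` (paper indexing), mapping block level `t+1` to `t` -/
def Usucc (K : KGains P) (L : LGains P) (t : Fin N) (s : ℂ) :
    Matrix (IdxGe P.md t.castSucc) (IdxGe P.md t.succ) ℂ :=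
  mc (msqrt (Psidd P t.castSucc)) *
      mc ((padGe P.md t.castSucc)ᵀ *
        (padGe P.md t.succ * K t.succ - padGe P.md t.castSucc * K t.castSucc)) *
      (s • 1 - mc (AKL P K L t.succ.castSucc))⁻¹ * mc (Bdown P t.succ) *
      (mc (msqrt (Psidd P t.succ)))⁻¹ +
    mc (msqrt (Psidd P t.castSucc)) * mc ((padGe P.md t.castSucc)ᵀ * padGe P.md t.succ) *
      (mc (msqrt (Psidd P t.succ)))⁻¹

/-- the co-inner factor `V_{N+1}(s)` (paper indexing: the last one) -/
def Vlast (K : KGains P) (L : LGains P) (s : ℂ) :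
    Matrix (IdxLe P.pd (Fin.last N)) (Fin P.r) ℂ :=
  (mc (msqrt (Phiuu P (Fin.last N))))⁻¹ * mc (Cup P (Fin.last N)) *
      (s • 1 - mc (AKL P K L (Fin.last (N+1))))⁻¹ *
      mc (P.W + L (Fin.last N) * Vup P (Fin.last N)) +
    (mc (msqrt (Phiuu P (Fin.last N))))⁻¹ * mc (Vup P (Fin.last N))

/-- the co-inner factor `V_{t+1}(s)` (paper indexing), for `t+1 ≤ N` -/
def Vmid (K : KGains P) (L : LGains P) (t : Fin N) (s : ℂ) :
    Matrix (IdxLe P.pd t.castSucc) (IdxLe P.pd t.succ) ℂ :=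
  (mc (msqrt (Phiuu P t.castSucc)))⁻¹ * mc (Cup P t.castSucc) *
      (s • 1 - mc (AKL P K L t.succ.castSucc))⁻¹ *
      mc ((L t.castSucc * (padLe P.pd t.castSucc)ᵀ - L t.succ * (padLe P.pd t.succ)ᵀ) *
        padLe P.pd t.succ * msqrt (Phiuu P t.succ)) +
    (mc (msqrt (Phiuu P t.castSucc)))⁻¹ *
      mc ((padLe P.pd t.castSucc)ᵀ * padLe P.pd t.succ * msqrt (Phiuu P t.succ))

/-- the product `U_1(s) U_2(s) ⋯ U_i(s)` -/
def Uprod (K : KGains P) (L : LGains P) (s : ℂ) :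
    (i : Fin (N+1)) → Matrix (Fin P.q) (IdxGe P.md i) ℂ :=
  Fin.induction (motive := fun i => Matrix (Fin P.q) (IdxGe P.md i) ℂ)
    (Uone P K L s) (fun t ih => ih * Usucc P K L t s)

/-- the product `V_j(s) V_{j+1}(s) ⋯ V_{N+1}(s)` -/
def Vprod (K : KGains P) (L : LGains P) (s : ℂ) :
    (j : Fin (N+1)) → Matrix (IdxLe P.pd j) (Fin P.r) ℂ :=
  Fin.reverseInduction (motive := fun j => Matrix (IdxLe P.pd j) (Fin P.r) ℂ)
    (Vlast P K L s) (fun t ih => Vmid P K L t s * ih)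

/-- closed-loop transfer function `G11(s) = ℱ(sI−𝒜)⁻¹𝒲` -/
def G11 (K : KGains P) (L : LGains P) (s : ℂ) : Matrix (Fin P.q) (Fin P.r) ℂ :=
  mc (Fcal P K) * (s • 1 - mc (Acal P K L))⁻¹ * mc (Wcal P L)

/-- closed-loop transfer function `G12(s) = ℱ(sI−𝒜)⁻¹ℬ + H` -/
def G12 (K : KGains P) (L : LGains P) (s : ℂ) : Matrix (Fin P.q) (Idx P.md) ℂ :=
  mc (Fcal P K) * (s • 1 - mc (Acal P K L))⁻¹ * mc (Bcal P) + mc P.H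

/-- closed-loop transfer function `G21(s) = 𝒞(sI−𝒜)⁻¹𝒲 + V` -/
def G21 (K : KGains P) (L : LGains P) (s : ℂ) : Matrix (Idx P.pd) (Fin P.r) ℂ :=
  mc (Ccal P) * (s • 1 - mc (Acal P K L))⁻¹ * mc (Wcal P L) + mc P.V

end

end TriLQG

/-! Write an eigenvector of `𝒜` for `z` as `(ζ u, x)`: the controller blocks are the partial sums
`v_i = u_0 + ⋯ + u_i` of the increments `u = μ v`, and `x` is the plant state (blocks are numbered
from `0`). Subtracting the plant row from the `i`-th controller row shows that the error `v_i - x`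
is driven by `A + L_i C_{↑i}` and by the increments `u_j`, `j > i`, only. If `z` is an eigenvalue
of no `A^{KL}_{k,k-1}`, go down from `i = N`: the last error solves `(A + L_N C) e = z e`, hence
vanishes; then each increment `u_{i+1}` solves the eigenvalue equation of
`A + B^{↓i+1} K_{i+1} + L_i C_{↑i}`, hence vanishes, and so does the error `v_i - x`; finally `x`
solves that of `A + B K_0`. So the eigenvector is zero, a contradiction. -/

open Finset

theorem Matrix.mem_spectrum_iff_exists_mulVec_eq_smul {K n : Type*} [Field K] [Fintype n]
    [DecidableEq n] {M : Matrix n n K} {z : K} :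
    z ∈ spectrum K M ↔ ∃ v ≠ 0, M *ᵥ v = z • v := by
  rw [← Matrix.spectrum_toLin', ← Module.End.hasEigenvalue_iff_mem_spectrum]
  constructor
  · intro h
    obtain ⟨v, hv⟩ := h.exists_hasEigenvector
    exact ⟨v, hv.2, by simpa using Module.End.mem_eigenspace_iff.mp hv.1⟩
  · rintro ⟨v, hv, hMv⟩
    exact Module.End.hasEigenvalue_of_hasEigenvector
      ⟨Module.End.mem_eigenspace_iff.mpr (by simpa using hMv), hv⟩

theorem Matrix.eq_zero_of_mulVec_eq_smul {K n : Type*} [Field K] [Fintype n] [DecidableEq n]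
    {M : Matrix n n K} {z : K} (hz : z ∉ spectrum K M) {v : n → K} (hv : M *ᵥ v = z • v) :
    v = 0 :=
  by_contra fun h => hz (mem_spectrum_iff_exists_mulVec_eq_smul.mpr ⟨v, h, hv⟩)

theorem Finset.sum_Iic_add_sum_Ioi {α M : Type*} [Fintype α] [LinearOrder α]
    [LocallyFiniteOrderBot α] [LocallyFiniteOrderTop α] [AddCommMonoid M] (f : α → M) (i : α) :
    ∑ j ∈ Iic i, f j + ∑ j ∈ Ioi i, f j = ∑ j, f j := by
  rw [← sum_union (disjoint_left.mpr fun j hj hj' => (mem_Iic.mp hj).not_gt (mem_Ioi.mp hj'))]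
  exact sum_congr (by ext j; simp [le_or_gt]) fun _ _ => rfl

theorem Fin.Iic_succ_eq_cons {N : ℕ} (t : Fin N) :
    Iic t.succ = Finset.cons t.succ (Iic t.castSucc)
      (by rw [mem_Iic, not_le]; exact t.castSucc_lt_succ) := by
  ext j
  simp only [mem_Iic, mem_cons, Fin.le_def, Fin.ext_iff, Fin.val_succ, Fin.val_castSucc]
  omega

theorem Fin.Ioi_castSucc_eq_cons {N : ℕ} (t : Fin N) :
    Ioi t.castSucc = Finset.cons t.succ (Ioi t.succ) (by rw [mem_Ioi]; exact lt_irrefl _) := by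
  ext j
  simp only [mem_Ioi, mem_cons, Fin.lt_def, Fin.ext_iff, Fin.val_succ, Fin.val_castSucc]
  omega

theorem Function.curry_add {α β M : Type*} [Add M] (f g : α × β → M) :
    Function.curry (f + g) = Function.curry f + Function.curry g :=
  rfl

theorem Function.curry_smul {α β R M : Type*} [SMul R M] (c : R) (f : α × β → M) :
    Function.curry (c • f) = c • Function.curry f :=
  rfl

namespace TriLQG

open Matrix

section Cascade

variable {K n : Type*} [Field K] [Fintype n] {N : ℕ} {A : Matrix n n K}
  {G H : Fin (N+1) → Matrix n n K} {z : K} {u : Fin (N+1) → n → K} {x : n → K}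

theorem cascade_error_eq
    (hrow : ∀ i, (A + H i) *ᵥ ∑ j ∈ Iic i, u j + ∑ j ∈ Iic i, G j *ᵥ u j - H i *ᵥ x =
      z • ∑ j ∈ Iic i, u j)
    (hplant : ∑ j, G j *ᵥ u j + A *ᵥ x = z • x) (i : Fin (N+1)) :
    (A + H i) *ᵥ (∑ j ∈ Iic i, u j - x) =
      z • (∑ j ∈ Iic i, u j - x) + ∑ j ∈ Ioi i, G j *ᵥ u j := by
  rw [← sum_Iic_add_sum_Ioi _ i] at hplant
  have hi := hrow i
  simp only [add_mulVec, mulVec_sub, smul_sub] at hi ⊢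
  linear_combination hi - hplant

/- `hrow` and `hplant` are the controller and plant rows of the eigenvalue equation of `𝒜` at
the vector `(ζ u, x)`, with `G j = B^{↓j} K_j` and `H i = L_i C_{↑i}`. -/
theorem cascade_eq_zero [DecidableEq n]
    (hrow : ∀ i, (A + H i) *ᵥ ∑ j ∈ Iic i, u j + ∑ j ∈ Iic i, G j *ᵥ u j - H i *ᵥ x =
      z • ∑ j ∈ Iic i, u j)
    (hplant : ∑ j, G j *ᵥ u j + A *ᵥ x = z • x)
    (h0 : z ∉ spectrum K (A + G 0))
    (hsucc : ∀ t : Fin N, z ∉ spectrum K (A + G t.succ + H t.castSucc))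
    (hlast : z ∉ spectrum K (A + H (Fin.last N))) :
    u = 0 ∧ x = 0 := by
  have herr := cascade_error_eq hrow hplant
  have hdown : ∀ i, (∀ j, i < j → u j = 0) ∧ ∑ j ∈ Iic i, u j - x = 0 := by
    intro i
    induction i using Fin.reverseInduction with
    | last =>
      refine ⟨fun j hj => absurd hj (Fin.le_last j).not_gt, eq_zero_of_mulVec_eq_smul hlast ?_⟩
      simpa [← Fin.top_eq_last, Ioi_top] using herr (Fin.last N)
    | cast t ih =>
      obtain ⟨hu, he⟩ := ih
      have he' : ∑ j ∈ Iic t.castSucc, u j - x = -u t.succ := by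
        rw [Fin.Iic_succ_eq_cons, sum_cons] at he
        linear_combination he
      have hut : u t.succ = 0 := by
        apply eq_zero_of_mulVec_eq_smul (hsucc t)
        have h := herr t.castSucc
        rw [he', Fin.Ioi_castSucc_eq_cons, sum_cons,
          sum_eq_zero fun j hj => by rw [hu j (mem_Ioi.mp hj), mulVec_zero], add_zero] at h
        simp only [add_mulVec, mulVec_neg, smul_neg] at h ⊢
        linear_combination -h
      refine ⟨fun j hj => ?_, by rw [he', hut, neg_zero]⟩
      rcases (Fin.castSucc_lt_iff_succ_le.mp hj).eq_or_lt with h | h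
      · rw [← h, hut]
      · exact hu j h
  obtain ⟨hu, he⟩ := hdown 0
  have hIic : Iic (0 : Fin (N+1)) = {0} := Iic_bot
  have hu0 : u 0 = x := by rwa [hIic, sum_singleton, sub_eq_zero] at he
  have hx : x = 0 := by
    apply eq_zero_of_mulVec_eq_smul h0
    rw [← sum_Iic_add_sum_Ioi _ 0,
      sum_eq_zero (s := Ioi 0) fun j hj => by rw [hu j (mem_Ioi.mp hj), mulVec_zero]] at hplant
    rw [hIic, sum_singleton, hu0, add_zero] at hplant
    rw [add_mulVec, ← hplant, add_comm]
  refine ⟨funext fun j => ?_, hx⟩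
  rcases (Fin.zero_le j).eq_or_lt with h | h
  · rw [← h, hu0, hx]
    rfl
  · exact hu j h

end Cascade

variable {N : ℕ}

theorem mc_mul {a b c : Type*} [Fintype b] (M : Matrix a b ℝ) (M' : Matrix b c ℝ) :
    mc (M * M') = mc M * mc M' :=
  Matrix.map_mul (f := Complex.ofRealHom)

theorem mc_add {a b : Type*} (M M' : Matrix a b ℝ) : mc (M + M') = mc M + mc M' :=
  Matrix.map_add _ Complex.ofReal_add _ _

theorem mc_one {ι : Type*} [DecidableEq ι] : mc (1 : Matrix ι ι ℝ) = 1 :=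
  Matrix.map_one _ Complex.ofReal_zero Complex.ofReal_one

theorem curry_mc_blkDiagN_mulVec {nd : Fin (N+1) → ℕ}
    (f : Fin (N+1) → Matrix (Idx nd) (Idx nd) ℝ) (w : CtrIx nd → ℂ) (i : Fin (N+1)) :
    Function.curry (mc (blkDiagN f) *ᵥ w) i = mc (f i) *ᵥ Function.curry w i := by
  ext a
  simp [mc, blkDiagN, mulVec, dotProduct, Fintype.sum_prod_type, apply_ite Complex.ofReal,
    ite_mul]

theorem curry_mc_zetaN_mulVec {nd : Fin (N+1) → ℕ} (w : CtrIx nd → ℂ) (i : Fin (N+1)) :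
    Function.curry (mc (zetaN nd) *ᵥ w) i = ∑ j ∈ Iic i, Function.curry w j := by
  ext a
  simp only [Function.curry_apply, mulVec, dotProduct, Fintype.sum_prod_type, mc, zetaN,
    map_apply, of_apply, Finset.sum_apply]
  simp [ite_and, apply_ite Complex.ofReal, ite_mul, ← sum_filter, filter_ge_eq_Iic]

theorem det_zetaN (nd : Fin (N+1) → ℕ) : (zetaN nd).det = 1 := by
  have htri : (zetaN nd).BlockTriangular fun x => OrderDual.toDual x.1 := by
    intro x y hxy
    simp [zetaN, not_le.mpr (OrderDual.toDual_lt_toDual.mp hxy)]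
  rw [htri.det_fintype]
  refine prod_eq_one fun k _ => ?_
  rw [show (zetaN nd).toSquareBlock (fun x => OrderDual.toDual x.1) k = 1 from ?_, det_one]
  ext x y
  have h : x.1.1 = y.1.1 := x.2.trans y.2.symm
  simp [zetaN, toSquareBlock_def, one_apply, h, Subtype.ext_iff, Prod.ext_iff]

theorem padLe_transpose_mul {β : Type*} {d : Fin (N+1) → ℕ} (i : Fin (N+1))
    (M : Matrix (Idx d) β ℝ) : (padLe d i)ᵀ * M = M.submatrix Subtype.val id := by
  ext c b
  simp [padLe, mul_apply]

theorem mul_padGe {α : Type*} {d : Fin (N+1) → ℕ} (i : Fin (N+1)) (M : Matrix α (Idx d) ℝ) :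
    M * padGe d i = M.submatrix id Subtype.val := by
  ext a c
  simp [padGe, mul_apply]

theorem mc_of_mulVec {α : Type*} {nd : Fin (N+1) → ℕ} (F : Fin (N+1) → Matrix α (Idx nd) ℝ)
    (w : CtrIx nd → ℂ) :
    mc (Matrix.of fun a (y : CtrIx nd) => F y.1 a y.2) *ᵥ w =
      ∑ j, mc (F j) *ᵥ Function.curry w j := by
  ext a
  simp [mc, mulVec, dotProduct, Fintype.sum_prod_type, Finset.sum_apply]

variable (P : Plant N) (K : KGains P) (L : LGains P)

theorem BK_mul_C : BK P L * P.C = Matrix.of fun y b => -(L y.1 * Cup P y.1) y.2 b := by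
  ext y b
  rw [mul_apply]
  simp only [BK, of_apply, neg_mul, sum_neg_distrib]
  rw [← mul_apply, Matrix.mul_assoc, padLe_transpose_mul]
  rfl

theorem B_mul_CK : P.B * CK P K =
    (Matrix.of fun a (y : CtrIx P.nd) => (Bdown P y.1 * K y.1) a y.2) * (zetaN P.nd)⁻¹ := by
  rw [CK, ← Matrix.mul_assoc]
  congr 1
  ext a y
  rw [mul_apply]
  simp only [of_apply]
  rw [← mul_apply, ← Matrix.mul_assoc, mul_padGe]
  rfl

theorem curry_mc_BK_mul_C_mulVec (x : Idx P.nd → ℂ) (i : Fin (N+1)) :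
    Function.curry (mc (BK P L * P.C) *ᵥ x) i = -(mc (L i * Cup P i) *ᵥ x) := by
  ext a
  simp [BK_mul_C, mc, mulVec, dotProduct]

theorem mc_AK_mulVec (w : CtrIx P.nd → ℂ) :
    mc (AK P K L) *ᵥ w =
      mc (blkDiagN fun _ => P.A) *ᵥ w + mc (blkDiagN fun k => L k * Cup P k) *ᵥ w +
        mc (zetaN P.nd) *ᵥ
          (mc (blkDiagN fun k => Bdown P k * K k) *ᵥ (mc (zetaN P.nd)⁻¹ *ᵥ w)) := by
  simp only [AK, mc_add, mc_mul, add_mulVec, mulVec_mulVec, Matrix.mul_assoc]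

theorem AKL_zero : AKL P K L 0 = P.A + Bdown P 0 * K 0 := by
  simp [AKL]

theorem AKL_succ_castSucc (t : Fin N) :
    AKL P K L t.succ.castSucc =
      P.A + Bdown P t.succ * K t.succ + L t.castSucc * Cup P t.castSucc := by
  have ht : t.succ.val ≠ 0 := by simp
  simp only [AKL, Fin.val_castSucc, t.succ.isLt, dif_pos, ht, if_false]
  congr

theorem AKL_last :
    AKL P K L (Fin.last (N+1)) = P.A + L (Fin.last N) * Cup P (Fin.last N) := by
  simp [AKL]

theorem eq_zero_of_mc_Acal_mulVec_eq_smul {z : ℂ}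
    (hAKL : ∀ k, z ∉ spectrum ℂ (mc (AKL P K L k))) {V : BigIx P.nd → ℂ}
    (hV : mc (Acal P K L) *ᵥ V = z • V) : V = 0 := by
  set x := V ∘ Sum.inr
  rw [Acal, mc, fromBlocks_map, fromBlocks_mulVec] at hV
  have hctr : mc (AK P K L) *ᵥ (V ∘ Sum.inl) + mc (BK P L * P.C) *ᵥ x = z • (V ∘ Sum.inl) :=
    funext fun a => congrFun hV (Sum.inl a)
  have hplant : mc (P.B * CK P K) *ᵥ (V ∘ Sum.inl) + mc P.A *ᵥ x = z • x :=
    funext fun a => congrFun hV (Sum.inr a)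
  rw [mc_AK_mulVec] at hctr
  rw [B_mul_CK, mc_mul, ← mulVec_mulVec] at hplant
  set u := mc (zetaN P.nd)⁻¹ *ᵥ (V ∘ Sum.inl)
  have hvc : V ∘ Sum.inl = mc (zetaN P.nd) *ᵥ u := by
    rw [mulVec_mulVec, ← mc_mul, mul_nonsing_inv _ (by simp [det_zetaN]), mc_one, one_mulVec]
  set G : Fin (N+1) → Matrix (Idx P.nd) (Idx P.nd) ℂ := fun j => mc (Bdown P j * K j)
  set H : Fin (N+1) → Matrix (Idx P.nd) (Idx P.nd) ℂ := fun j => mc (L j * Cup P j)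
  have hrow : ∀ i, (mc P.A + H i) *ᵥ ∑ j ∈ Iic i, Function.curry u j +
      ∑ j ∈ Iic i, G j *ᵥ Function.curry u j - H i *ᵥ x =
        z • ∑ j ∈ Iic i, Function.curry u j := by
    intro i
    have hi := congrFun (congrArg Function.curry hctr) i
    simp only [Function.curry_add, Function.curry_smul, Pi.add_apply,
      Pi.smul_apply, curry_mc_blkDiagN_mulVec, curry_mc_zetaN_mulVec,
      curry_mc_BK_mul_C_mulVec, hvc] at hi
    rw [add_mulVec, ← hi]
    abel
  have hplant' : ∑ j, G j *ᵥ Function.curry u j + mc P.A *ᵥ x = z • x := by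
    rwa [mc_of_mulVec fun j => Bdown P j * K j] at hplant
  have h0 := hAKL 0
  rw [AKL_zero, mc_add] at h0
  have hsucc := fun t => hAKL (Fin.castSucc (Fin.succ t))
  simp only [AKL_succ_castSucc, mc_add] at hsucc
  have hlast := hAKL (Fin.last (N+1))
  rw [AKL_last, mc_add] at hlast
  obtain ⟨hu, hx⟩ := cascade_eq_zero hrow hplant' h0 hsucc hlast
  have hu' : u = 0 := funext fun y => congrFun (congrFun hu y.1) y.2
  rw [hu', mulVec_zero] at hvc
  ext (a | a)
  · exact congrFun hvc a
  · exact congrFun hx a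

theorem stmt4_general {N : ℕ} (P : Plant N)
    (K : KGains P) (L : LGains P)
    (h : ∀ k : Fin (N+2), IsHurwitz (AKL P K L k)) :
    IsHurwitz (Acal P K L) := by
  intro z hz
  by_contra hre
  have hAKL : ∀ k, z ∉ spectrum ℂ (mc (AKL P K L k)) := fun k hk => hre (h k z hk)
  obtain ⟨V, hV0, hV⟩ := mem_spectrum_iff_exists_mulVec_eq_smul.mp hz
  exact hV0 (eq_zero_of_mc_Acal_mulVec_eq_smul P K L hAKL hV)

/-- if all `A^{KL}_{k,k−1}` are Hurwitz then the closed-loop matrix `𝒜` is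
Hurwitz, i.e. the controller `(A_K, B_K, C_K)` internally stabilizes the plant. -/
theorem stmt4 {N : ℕ} (P : Plant N)
    (hdim : ∀ k : Fin (N+1), 0 < P.nd k ∧ 0 < P.md k ∧ 0 < P.pd k)
    (K : KGains P) (L : LGains P)
    (h : ∀ k : Fin (N+2), IsHurwitz (AKL P K L k)) :
    IsHurwitz (Acal P K L) :=
  stmt4_general P K L h

end TriLQG
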